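/- An element a of a group G is a left 3-Engel element of G if and only if for every g ∈ G the subgroup ⟨a, a^g⟩ is nilpotent of class at most 2. -/

import Mathlib

/-- Left-normed commutator: `[u,v] = u⁻¹v⁻¹uv`. -/
def cmt {G : Type*} [Group G] (u v : G) : G := u⁻¹ * v⁻¹ * u * v

/-- Conjugation: `u^g = g⁻¹ug`. -/
def cnj {G : Type*} [Group G] (u g : G) : G := g⁻¹ * u * g

/-- A subgroup is nilpotent of class at most `n`. -/
def classLE {G : Type*} [Group G] (H : Subgroup G) (n : ℕ) : Prop :=
  (⊤ : Subgroup ↥H).lowerCentralSeries n = ⊥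

/-!
Write `b = a^g`. The Engel word `[g,a,a,a]` is conjugate to `⁅a, ⁅a, b⁆⁆⁻¹`, and `[g⁻¹,a,a,a]` to
`⁅b, ⁅a, b⁆⁆`; so `a` is left 3-Engel exactly when `⁅a, b⁆` commutes with `a` and `b` for every `g`.
A group generated by elements whose pairwise commutators are central has class at most 2, because
its quotient by the centre is generated by commuting images. Conversely, in a group of class at
most 2 every commutator of weight three vanishes, and `[x,a] = (a^x)⁻¹a` lies in `⟨a, a^x⟩`.
Mathlib's commutator is `⁅u, v⁆ = uvu⁻¹v⁻¹`, so `[u,v] = ⁅u⁻¹, v⁻¹⁆`.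
-/

open Subgroup
open scoped commutatorElement

section

variable {G : Type*} [Group G]

theorem cmt_eq_commutatorElement (u v : G) : cmt u v = ⁅u⁻¹, v⁻¹⁆ := by
  simp only [cmt, commutatorElement_def, inv_inv]

theorem classLE_iff (H : Subgroup G) (n : ℕ) : classLE H n ↔ H.lowerCentralSeries n = ⊥ := by
  rw [classLE, ← map_subtype_inj, Subgroup.map_bot, top_subtype_lowerCentralSeries]

theorem cmt_cmt_eq_one_of_classLE_two {H : Subgroup G} (hH : classLE H 2) {u v w : G}
    (hu : u ∈ H) (hv : v ∈ H) (hw : w ∈ H) : cmt (cmt u v) w = 1 := by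
  have huv : cmt u v ∈ H.lowerCentralSeries 1 := by
    rw [cmt_eq_commutatorElement]
    exact commutator_mem_commutator (inv_mem hu) (inv_mem hv)
  have huvw : cmt (cmt u v) w ∈ H.lowerCentralSeries 2 := by
    rw [cmt_eq_commutatorElement]
    exact commutator_mem_commutator (inv_mem huv) (inv_mem hw)
  rwa [(classLE_iff H 2).mp hH, mem_bot] at huvw

theorem top_lowerCentralSeries_two_eq_bot_of_closure_eq_top {K : Type*} [Group K] {s : Set K}
    (hs : closure s = ⊤) (hcomm : ∀ x ∈ s, ∀ y ∈ s, ⁅x, y⁆ ∈ center K) :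
    (⊤ : Subgroup K).lowerCentralSeries 2 = ⊥ := by
  apply Subgroup.lowerCentralSeries_succ_eq_bot
  rw [top_lowerCentralSeries_one, ← Normal.quotient_commutative_iff_commutator_le,
    ← center_eq_top_iff, eq_top_iff]
  let π := QuotientGroup.mk' (center K)
  have hgen : closure (π '' s) = ⊤ := by
    rw [← MonoidHom.map_closure, hs, map_top_of_surjective _ (QuotientGroup.mk'_surjective _)]
  have hcenter : center (K ⧸ center K) = centralizer (π '' s) := by
    rw [← centralizer_closure, hgen, coe_top, centralizer_univ]
  rw [hcenter, ← hgen, closure_le]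
  rintro _ ⟨x, hx, rfl⟩ _ ⟨y, hy, rfl⟩
  rw [← commutatorElement_eq_one_iff_mul_comm, ← map_commutatorElement, QuotientGroup.mk'_apply,
    QuotientGroup.eq_one_iff]
  exact hcomm y hy x hx

theorem classLE_closure_of_commutatorElement_mem_centralizer {s : Set G}
    (hs : ∀ x ∈ s, ∀ y ∈ s, ⁅x, y⁆ ∈ centralizer s) : classLE (closure s) 2 := by
  refine top_lowerCentralSeries_two_eq_bot_of_closure_eq_top closure_closure_coe_preimage ?_
  intro x hx y hy
  rw [mem_center_iff]
  intro z
  have hxy := hs x hx y hy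
  rw [← centralizer_closure] at hxy
  exact Subtype.ext (mem_centralizer_iff.mp hxy z z.2)

theorem classLE_closure_pair_of_commutatorElement_mem_centralizer {x y : G}
    (hxy : ⁅x, y⁆ ∈ centralizer {x, y}) : classLE (closure {x, y}) 2 := by
  apply classLE_closure_of_commutatorElement_mem_centralizer
  rintro u (rfl | rfl) v (rfl | rfl)
  · simp only [commutatorElement_self, one_mem]
  · exact hxy
  · rw [← commutatorElement_inv]
    exact inv_mem hxy
  · simp only [commutatorElement_self, one_mem]

theorem isConj_cmt_three_inv_commutatorElement_left (a g : G) :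
    IsConj (cmt (cmt (cmt g a) a) a)⁻¹ ⁅a, ⁅a, cnj a g⁆⁆ := by
  refine isConj_iff.mpr ⟨a * cnj a g * a⁻¹ * (cnj a g)⁻¹ * a ^ 3, ?_⟩
  simp only [cmt, cnj, commutatorElement_def]
  group

theorem isConj_cmt_three_commutatorElement_right (a g : G) :
    IsConj (cmt (cmt (cmt g⁻¹ a) a) a) ⁅cnj a g, ⁅a, cnj a g⁆⁆ := by
  refine isConj_iff.mpr ⟨g⁻¹ * a ^ 3, ?_⟩
  simp only [cmt, cnj, commutatorElement_def]
  group

theorem commutatorElement_conj_mem_centralizer_of_leftEngel {a : G}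
    (ha : ∀ x : G, cmt (cmt (cmt x a) a) a = 1) (g : G) :
    ⁅a, cnj a g⁆ ∈ centralizer {a, cnj a g} := by
  have hleft := isConj_cmt_three_inv_commutatorElement_left a g
  have hright := isConj_cmt_three_commutatorElement_right a g
  rw [ha, inv_one, isConj_one_right, commutatorElement_eq_one_iff_mul_comm] at hleft
  rw [ha, isConj_one_right, commutatorElement_eq_one_iff_mul_comm] at hright
  rw [mem_centralizer_iff]
  rintro _ (rfl | rfl)
  exacts [hleft, hright]

end

theorem stmt4 {G : Type*} [Group G] (a : G) :
    (∀ x : G, cmt (cmt (cmt x a) a) a = 1) ↔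
      (∀ g : G, classLE (Subgroup.closure ({a, cnj a g} : Set G)) 2) := by
  constructor
  · intro ha g
    exact classLE_closure_pair_of_commutatorElement_mem_centralizer
      (commutatorElement_conj_mem_centralizer_of_leftEngel ha g)
  intro h x
  have ha : a ∈ closure {a, cnj a x} := subset_closure (by simp)
  have hconj : cnj a x ∈ closure {a, cnj a x} := subset_closure (by simp)
  have hxa : cmt x a = (cnj a x)⁻¹ * a := by simp only [cmt, cnj]; group
  exact cmt_cmt_eq_one_of_classLE_two (h x) (hxa ▸ mul_mem (inv_mem hconj) ha) ha ha
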